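/- arXiv:2512.21134 — 10 statements merged into one kernel-verified Lean document; each statement's English description precedes it below -/
import Mathlib

section
/- If ρ is an order-decreasing, order-reversing (antitone) partial transformation of the chain [n] = {1,…,n} with image of size p ≥ 1, then p ≤ ⌈n/2⌉ (equivalently 2p ≤ n+1). -/
/-- A partial transformation of the chain `[n]` (elements of `Fin n`). -/
def PT (n : ℕ) := Fin n → Option (Fin n)

/-- Right-to-left composition: `x (ρσ) = (x ρ) σ`. -/
def comp {n : ℕ} (ρ σ : PT n) : PT n := fun x => (ρ x).bind σ

/-- The identity partial transformation. -/
def idPT (n : ℕ) : PT n := fun x => some x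

/-- Isotone (order-preserving) on its domain. -/
def IsIsotone {n : ℕ} (ρ : PT n) : Prop :=
  ∀ x x' y y' : Fin n, ρ x = some y → ρ x' = some y' → x ≤ x' → y ≤ y'

/-- Antitone (order-reversing) on its domain. -/
def IsAntitone {n : ℕ} (ρ : PT n) : Prop :=
  ∀ x x' y y' : Fin n, ρ x = some y → ρ x' = some y' → x ≤ x' → y' ≤ y

/-- Order-decreasing on its domain. -/
def IsDecreasing {n : ℕ} (ρ : PT n) : Prop :=
  ∀ x y : Fin n, ρ x = some y → y ≤ x

/-- Member of the monoid `DORPₙ`: monotone and order-decreasing. -/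
def IsDORP {n : ℕ} (ρ : PT n) : Prop :=
  IsDecreasing ρ ∧ (IsIsotone ρ ∨ IsAntitone ρ)

/-- The image of a partial transformation. -/
def im {n : ℕ} (ρ : PT n) : Set (Fin n) := {y | ∃ x, ρ x = some y}

/-- The domain of a partial transformation. -/
def domSet {n : ℕ} (ρ : PT n) : Set (Fin n) := {x | ρ x ≠ none}

/-- The height of a partial transformation: the size of its image. -/
noncomputable def height {n : ℕ} (ρ : PT n) : ℕ := (im ρ).ncard

/-- Equality of kernels: same domain and the same partition into fibers. -/
def kerEq {n : ℕ} (ρ σ : PT n) : Prop :=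
  (∀ x, ρ x = none ↔ σ x = none) ∧ (∀ x y, ρ x = ρ y ↔ σ x = σ y)

/-!
Let `x₀` be the least point of the domain and `m = x₀ρ`. Antitonicity makes `m` the largest
point of the image, so the image lies in `[0, m]` and `p ≤ m + 1 ≤ x₀ + 1` since `ρ` is
decreasing. On the other hand the image is the image of the domain, which lies in `[x₀, n)`,
so `p ≤ n - x₀`. Adding the two bounds gives `2p ≤ n + 1`.
-/

theorem Fin.ncard_le_of_subset_Ici {n : ℕ} {s : Set (Fin n)} {a : Fin n}
    (h : s ⊆ Set.Ici a) : s.ncard ≤ n - a := by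
  calc s.ncard ≤ (Set.Ici a).ncard := Set.ncard_le_ncard h
    _ = n - a := by rw [← Finset.coe_Ici, Set.ncard_coe_finset, Fin.card_Ici]

theorem Fin.ncard_le_of_subset_Iic {n : ℕ} {s : Set (Fin n)} {a : Fin n}
    (h : s ⊆ Set.Iic a) : s.ncard ≤ a + 1 := by
  calc s.ncard ≤ (Set.Iic a).ncard := Set.ncard_le_ncard h
    _ = a + 1 := by rw [← Finset.coe_Iic, Set.ncard_coe_finset, Fin.card_Iic]

theorem height_le_ncard_domSet {n : ℕ} (ρ : PT n) : height ρ ≤ (domSet ρ).ncard := by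
  have him : im ρ ⊆ (fun x => (ρ x).getD x) '' domSet ρ := by
    rintro y ⟨x, hx⟩
    exact ⟨x, by simp [domSet, hx], by simp [hx]⟩
  exact (Set.ncard_le_ncard him).trans (Set.ncard_image_le (Set.toFinite _))

theorem height_le_of_forall_domSet_le {n : ℕ} (ρ : PT n) {x₀ : Fin n}
    (hmin : ∀ x ∈ domSet ρ, x₀ ≤ x) : height ρ ≤ n - x₀ :=
  (height_le_ncard_domSet ρ).trans (Fin.ncard_le_of_subset_Ici hmin)

theorem IsAntitone.height_le {n : ℕ} {ρ : PT n} (hρ : IsAntitone ρ) {x₀ m : Fin n}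
    (hx₀ : ρ x₀ = some m) (hmin : ∀ x ∈ domSet ρ, x₀ ≤ x) : height ρ ≤ m + 1 := by
  refine Fin.ncard_le_of_subset_Iic ?_
  rintro y ⟨x, hx⟩
  exact hρ x₀ x m y hx₀ hx (hmin x (by simp [domSet, hx]))

/-- An antitone, order-decreasing partial transformation of `[n]` with image of size
`p ≥ 1` satisfies `p ≤ ⌈n/2⌉`, i.e. `2p ≤ n+1`. -/
theorem stmt1 (n p : ℕ) (ρ : PT n) (hdec : IsDecreasing ρ) (hanti : IsAntitone ρ)
    (hp : height ρ = p) (hp1 : 1 ≤ p) : 2 * p ≤ n + 1 := by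
  have hdom : (domSet ρ).Nonempty := by
    have := height_le_ncard_domSet ρ
    exact Set.nonempty_of_ncard_ne_zero (by omega)
  obtain ⟨x₀, hx₀, hmin⟩ : ∃ x₀ ∈ domSet ρ, ∀ x ∈ domSet ρ, x₀ ≤ x :=
    Set.exists_min_image (domSet ρ) id (Set.toFinite _) hdom
  obtain ⟨m, hm⟩ := Option.ne_none_iff_exists'.mp hx₀
  have hle_max_image := hanti.height_le hm hmin
  have hle_domain := height_le_of_forall_domSet_le ρ hmin
  have hmx : (m : ℕ) ≤ x₀ := hdec x₀ m hm
  omega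
end

section
/- An injective isotone order-decreasing partial transformation of [n] with domain {A₁ < … < A_p} and images a₁ < … < a_p (so Aᵢρ = aᵢ) can be reversed (i.e., the map sending Aᵢ to a_{p+1−i} is still order-decreasing and antitone) if and only if a_p ≤ A₁; moreover this forces p ≤ ⌈n/2⌉. -/
lemma gap_aux {n p : ℕ} (f : Fin p → Fin n) (hf : StrictMono f) :
    ∀ d : ℕ, ∀ i j : Fin p, (j : ℕ) = (i : ℕ) + d → (f i : ℕ) + d ≤ (f j : ℕ) := by
  intro d
  induction d with
  | zero => intro i j h; have : i = j := Fin.ext (by omega); simp [this]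
  | succ k ih =>
    intro i j h
    have hj : (j : ℕ) = (k + (i : ℕ)) + 1 := by omega
    have hk : k + (i : ℕ) < p := by omega
    have h1 : (f i : ℕ) + k ≤ f ⟨k + i, hk⟩ := ih i ⟨k + i, hk⟩ (by simp; omega)
    have h2 : f ⟨k + i, hk⟩ < f j := hf (by simp [Fin.lt_def]; omega)
    have := Fin.lt_def.mp h2
    omega

/-- An injective isotone order-decreasing partial transformation of `[n]` with domain
`A₁ < … < A_p` and images `a₁ < … < a_p` (so `Aᵢ ↦ aᵢ`) can be reversed (i.e. the map
`Aᵢ ↦ a_{p+1−i}` is still order-decreasing, and automatically antitone) if and only if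
`a_p ≤ A₁`; moreover this condition forces `p ≤ ⌈n/2⌉`, i.e. `2p ≤ n+1`. -/
theorem stmt2 (n p : ℕ) (hp : 0 < p) (A a : Fin p → Fin n)
    (hA : StrictMono A) (ha : StrictMono a) (hdec : ∀ i, a i ≤ A i) :
    ((∀ i : Fin p, a (Fin.rev i) ≤ A i) ↔ a ⟨p - 1, by omega⟩ ≤ A ⟨0, hp⟩) ∧
      (a ⟨p - 1, by omega⟩ ≤ A ⟨0, hp⟩ → 2 * p ≤ n + 1) := by
  constructor
  · constructor
    · intro h
      have := h ⟨0, hp⟩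
      have hr : Fin.rev ⟨0, hp⟩ = (⟨p - 1, by omega⟩ : Fin p) := by
        ext; simp [Fin.rev]
      rwa [hr] at this
    · intro h i
      have h1 : a (Fin.rev i) ≤ a ⟨p - 1, by omega⟩ :=
        ha.monotone (by simp [Fin.le_def, Fin.rev]; omega)
      have h2 : A ⟨0, hp⟩ ≤ A i := hA.monotone (by simp [Fin.le_def])
      exact le_trans h1 (le_trans h h2)
  · intro h
    have h1 : (a ⟨0, hp⟩ : ℕ) + (p - 1) ≤ a ⟨p - 1, by omega⟩ :=
      gap_aux a ha (p - 1) ⟨0, hp⟩ ⟨p - 1, by omega⟩ (by simp)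
    have h2 : (A ⟨0, hp⟩ : ℕ) + (p - 1) ≤ A ⟨p - 1, by omega⟩ :=
      gap_aux A hA (p - 1) ⟨0, hp⟩ ⟨p - 1, by omega⟩ (by simp)
    have h3 : (A ⟨p - 1, by omega⟩ : ℕ) < n := Fin.is_lt _
    have h4 := Fin.le_def.mp h
    omega
end

section
/- The number of antitone order-decreasing partial transformations of [n] with |dom ρ| = r and |im ρ| = p equals C(r−1, p−1)·C(n+1, r+p). -/
/-!
An antitone order-decreasing `ρ` with domain `d₀ < ⋯ < d_{r-1}` and image `y₀ < ⋯ < y_{p-1}`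
is the same thing as these two enumerations together with the monotone surjection
`f : Fin r → Fin p` given by `ρ dᵢ = y_{p-1-f i}`. Being antitone means that `f` is monotone; being
moreover decreasing means that the image lies below the domain, `y_{p-1} ≤ d₀` (compare the image
of a domain point with that of a larger or smaller one). The three pieces are independent, so the
count factors. A monotone surjection `Fin r → Fin p` is determined by its set of ascents, a
`(p-1)`-subset of the `r-1` gaps, and a separated pair `y_{p-1} ≤ d₀` is the same as the
`(p+r)`-subset `{y₀ < ⋯ < y_{p-1} < d₀ + 1 < ⋯ < d_{r-1} + 1}` of `[n+1]`.
-/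

open Finset Function

section MonotoneSurjections

variable {r p : ℕ}

def ascents (f : Fin (r + 1) → Fin (p + 1)) : Finset (Fin r) :=
  {e | f e.castSucc < f e.succ}

def countBelow (c : Finset (Fin r)) (i : Fin (r + 1)) : ℕ :=
  #{e ∈ c | e.castSucc < i}

lemma countBelow_zero (c : Finset (Fin r)) : countBelow c 0 = 0 := by
  simp [countBelow]

lemma countBelow_succ (c : Finset (Fin r)) (e : Fin r) :
    countBelow c e.succ = countBelow c e.castSucc + if e ∈ c then 1 else 0 := by
  simp only [countBelow, Fin.castSucc_lt_succ_iff, Fin.castSucc_lt_castSucc_iff]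
  split_ifs with he
  · rw [← card_insert_of_notMem (a := e) (s := {e' ∈ c | e' < e}) (by simp)]
    congr 1
    ext e'
    simp only [mem_filter, mem_insert]
    grind
  · congr 1
    exact filter_congr fun e' he' => by grind

lemma countBelow_last (c : Finset (Fin r)) : countBelow c (Fin.last r) = #c := by
  rw [countBelow, filter_true_of_mem fun e _ => Fin.castSucc_lt_last e]

lemma countBelow_le_card (c : Finset (Fin r)) (i : Fin (r + 1)) : countBelow c i ≤ #c :=
  card_filter_le _ _

lemma countBelow_mono (c : Finset (Fin r)) : Monotone (countBelow c) :=
  fun _ _ hij => card_le_card (monotone_filter_right _ fun _ _ h => h.trans_le hij)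

lemma exists_eq_of_le_of_succ_le_add_one {g : Fin (r + 1) → ℕ} (h0 : g 0 = 0)
    (hstep : ∀ e : Fin r, g e.succ ≤ g e.castSucc + 1) (i : Fin (r + 1)) {j : ℕ}
    (hj : j ≤ g i) : ∃ i', g i' = j := by
  induction i using Fin.induction generalizing j with
  | zero => exact ⟨0, by omega⟩
  | succ e ih =>
    rcases hj.lt_or_eq with hlt | rfl
    · exact ih (by have := hstep e; omega)
    · exact ⟨_, rfl⟩

def stepFun (c : Finset (Fin r)) (hc : #c = p) (i : Fin (r + 1)) : Fin (p + 1) :=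
  ⟨countBelow c i, Nat.lt_succ_of_le (hc ▸ countBelow_le_card c i)⟩

lemma stepFun_monotone (c : Finset (Fin r)) (hc : #c = p) : Monotone (stepFun c hc) :=
  fun _ _ hij => Fin.le_def.2 (countBelow_mono c hij)

lemma stepFun_surjective (c : Finset (Fin r)) (hc : #c = p) : Surjective (stepFun c hc) := by
  intro j
  obtain ⟨i, hi⟩ := exists_eq_of_le_of_succ_le_add_one (countBelow_zero c)
    (fun e => by rw [countBelow_succ]; split_ifs <;> omega) (Fin.last r)
    (j := j) (by rw [countBelow_last, hc]; exact Fin.is_le j)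
  exact ⟨i, Fin.ext hi⟩

lemma ascents_stepFun (c : Finset (Fin r)) (hc : #c = p) : ascents (stepFun c hc) = c := by
  ext e
  simp only [ascents, stepFun, mem_filter, mem_univ, true_and, Fin.mk_lt_mk, countBelow_succ]
  split_ifs <;> simp_all

lemma Monotone.apply_zero_of_surjective {f : Fin (r + 1) → Fin (p + 1)} (hmono : Monotone f)
    (hsurj : Surjective f) : f 0 = 0 := by
  obtain ⟨i, hi⟩ := hsurj 0
  exact le_antisymm (hi ▸ hmono (Fin.zero_le i)) (Fin.zero_le _)

lemma Monotone.apply_last_of_surjective {f : Fin (r + 1) → Fin (p + 1)} (hmono : Monotone f)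
    (hsurj : Surjective f) : f (Fin.last r) = Fin.last p := by
  obtain ⟨i, hi⟩ := hsurj (Fin.last p)
  exact le_antisymm (Fin.le_last _) (hi ▸ hmono (Fin.le_last i))

lemma Monotone.apply_succ_le_of_surjective {f : Fin (r + 1) → Fin (p + 1)} (hmono : Monotone f)
    (hsurj : Surjective f) (e : Fin r) :
    (f e.succ : ℕ) ≤ f e.castSucc + 1 := by
  by_contra! hgap
  obtain ⟨i, hi⟩ := hsurj ⟨f e.castSucc + 1, by omega⟩
  have hi' : (f i : ℕ) = f e.castSucc + 1 := congrArg Fin.val hi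
  rcases le_or_gt i e.castSucc with hle | hlt
  · have := Fin.le_def.1 (hmono hle)
    omega
  · have := Fin.le_def.1 (hmono (Fin.castSucc_lt_iff_succ_le.1 hlt))
    omega

lemma countBelow_ascents {f : Fin (r + 1) → Fin (p + 1)} (hmono : Monotone f)
    (hsurj : Surjective f) (i : Fin (r + 1)) : countBelow (ascents f) i = f i := by
  induction i using Fin.induction with
  | zero => rw [countBelow_zero, hmono.apply_zero_of_surjective hsurj, Fin.val_zero]
  | succ e ih =>
    have hle := Fin.le_def.1 (hmono (Fin.castSucc_le_succ e))
    have hstep := hmono.apply_succ_le_of_surjective hsurj e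
    rw [countBelow_succ, ih]
    simp only [ascents, mem_filter, mem_univ, true_and, Fin.lt_def]
    split_ifs <;> omega

def monotoneSurjectiveEquiv :
    {f : Fin (r + 1) → Fin (p + 1) // Monotone f ∧ Surjective f} ≃
      {c : Finset (Fin r) // #c = p} where
  toFun f := ⟨ascents f.1, by
    have := countBelow_ascents f.2.1 f.2.2 (Fin.last r)
    rwa [countBelow_last, f.2.1.apply_last_of_surjective f.2.2, Fin.val_last] at this⟩
  invFun c := ⟨stepFun c.1 c.2, stepFun_monotone c.1 c.2, stepFun_surjective c.1 c.2⟩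
  left_inv f := Subtype.ext <| funext fun i => Fin.ext (countBelow_ascents f.2.1 f.2.2 i)
  right_inv c := Subtype.ext (ascents_stepFun c.1 c.2)

theorem card_monotone_surjective :
    Nat.card {f : Fin (r + 1) → Fin (p + 1) // Monotone f ∧ Surjective f} = r.choose p := by
  rw [Nat.card_congr monotoneSurjectiveEquiv, Nat.card_eq_fintype_card, Fintype.card_finset_len,
    Fintype.card_fin]

end MonotoneSurjections

section SeparatedPairs

lemma Fin.strictMono_append {α : Type*} [Preorder α] {m k : ℕ} {u : Fin m → α} {v : Fin k → α}
    (hu : StrictMono u) (hv : StrictMono v) (huv : ∀ i j, u i < v j) :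
    StrictMono (Fin.append u v) := by
  intro a b hab
  induction a using Fin.addCases with
  | left i =>
    induction b using Fin.addCases with
    | left i' => simpa using hu (Fin.lt_def.2 hab)
    | right j' => simpa using huv i j'
  | right j =>
    induction b using Fin.addCases with
    | left i' => simp only [Fin.lt_def, Fin.val_castAdd, Fin.val_natAdd] at hab; omega
    | right j' => simpa using hv ((Fin.natAdd_lt_natAdd_iff m).1 hab)

variable {n p r : ℕ}

abbrev SeparatedPairs (n p r : ℕ) :=
  {yd : (Fin p ↪o Fin n) × (Fin r ↪o Fin n) // ∀ i j, yd.1 i ≤ yd.2 j}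

def SeparatedPairs.glue (s : SeparatedPairs n p r) : Fin (p + r) ↪o Fin (n + 1) :=
  OrderEmbedding.ofStrictMono (Fin.append (Fin.castSucc ∘ s.1.1) (Fin.succ ∘ s.1.2)) <|
    Fin.strictMono_append (Fin.strictMono_castSucc.comp s.1.1.strictMono)
      (Fin.strictMono_succ.comp s.1.2.strictMono)
      fun i j => Fin.castSucc_lt_succ_iff.2 (s.2 i j)

namespace SeparatedPairs

lemma glue_castAdd (s : SeparatedPairs n p r) (i : Fin p) :
    s.glue (Fin.castAdd r i) = (s.1.1 i).castSucc := by
  simp [glue]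

lemma glue_natAdd (s : SeparatedPairs n p r) (j : Fin r) :
    s.glue (Fin.natAdd p j) = (s.1.2 j).succ := by
  simp [glue]

lemma glue_injective : Injective (glue (n := n) (p := p) (r := r)) := by
  rintro ⟨⟨y, d⟩, h⟩ ⟨⟨y', d'⟩, h'⟩ heq
  have hy : y = y' := by
    ext i
    simpa [glue_castAdd] using congrArg Fin.val (DFunLike.congr_fun heq (Fin.castAdd r i))
  have hd : d = d' := by
    ext j
    simpa [glue_natAdd] using congrArg Fin.val (DFunLike.congr_fun heq (Fin.natAdd p j))
  subst hy hd
  rfl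

lemma glue_surjective : Surjective (glue (n := n) (p := p + 1) (r := r + 1)) := by
  intro t
  have hlow (i : Fin (p + 1)) : t (Fin.castAdd (r + 1) i) < t (Fin.natAdd (p + 1) 0) :=
    t.strictMono (by simp only [Fin.lt_def, Fin.val_castAdd, Fin.val_natAdd]; omega)
  have hhigh (j : Fin (r + 1)) : t (Fin.castAdd (r + 1) 0) < t (Fin.natAdd (p + 1) j) :=
    t.strictMono (by simp only [Fin.lt_def, Fin.val_castAdd, Fin.val_natAdd]; omega)
  let y : Fin (p + 1) ↪o Fin n := OrderEmbedding.ofStrictMono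
    (fun i => (t (Fin.castAdd (r + 1) i)).castPred (Fin.ne_last_of_lt (hlow i)))
    fun i i' hii' => Fin.castPred_lt_castPred_iff.2 (t.strictMono (Fin.lt_def.2 hii'))
  let d : Fin (r + 1) ↪o Fin n := OrderEmbedding.ofStrictMono
    (fun j => (t (Fin.natAdd (p + 1) j)).pred (Fin.ne_zero_of_lt (hhigh j)))
    fun j j' hjj' =>
      Fin.pred_lt_pred_iff.2 (t.strictMono ((Fin.natAdd_lt_natAdd_iff _).2 hjj'))
  have hyd (i : Fin (p + 1)) (j : Fin (r + 1)) : y i ≤ d j := by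
    have := t.strictMono (show Fin.castAdd (r + 1) i < Fin.natAdd (p + 1) j by
      simp only [Fin.lt_def, Fin.val_castAdd, Fin.val_natAdd]; omega)
    rw [← Fin.castSucc_castPred _ (Fin.ne_last_of_lt (hlow i)),
      ← Fin.succ_pred _ (Fin.ne_zero_of_lt (hhigh j))] at this
    exact Fin.castSucc_lt_succ_iff.1 this
  refine ⟨⟨(y, d), hyd⟩, DFunLike.ext _ _ fun k => ?_⟩
  induction k using Fin.addCases with
  | left i =>
    exact (glue_castAdd _ i).trans (Fin.castSucc_castPred _ (Fin.ne_last_of_lt (hlow i)))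
  | right j => exact (glue_natAdd _ j).trans (Fin.succ_pred _ (Fin.ne_zero_of_lt (hhigh j)))

theorem card :
    Nat.card (SeparatedPairs n (p + 1) (r + 1)) = (n + 1).choose (p + 1 + (r + 1)) := by
  rw [Nat.card_eq_of_bijective _ ⟨glue_injective, glue_surjective⟩,
    Nat.card_congr Set.powersetCard.ofFinEmbEquiv, Set.powersetCard.card, Nat.card_fin]

end SeparatedPairs

end SeparatedPairs


section Enumerations

variable {n r p : ℕ}

noncomputable def ofEnum (f : Fin r → Fin p) (y : Fin p ↪o Fin n) (d : Fin r ↪o Fin n) : PT n :=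
  fun x => (partialInv d x).map fun i => y (f i).rev

lemma ofEnum_apply (f : Fin r → Fin p) (y : Fin p ↪o Fin n) (d : Fin r ↪o Fin n) (i : Fin r) :
    ofEnum f y d (d i) = some (y (f i).rev) := by
  simp [ofEnum, partialInv_left d.injective]

lemma ofEnum_eq_none (f : Fin r → Fin p) (y : Fin p ↪o Fin n) (d : Fin r ↪o Fin n) {x : Fin n}
    (hx : x ∉ Set.range d) : ofEnum f y d x = none := by
  simp only [ofEnum, partialInv]
  rw [dif_neg (by simpa using hx), Option.map_none]

lemma ofEnum_eq_some_iff (f : Fin r → Fin p) (y : Fin p ↪o Fin n) (d : Fin r ↪o Fin n)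
    {x v : Fin n} : ofEnum f y d x = some v ↔ ∃ i, d i = x ∧ y (f i).rev = v := by
  by_cases hx : x ∈ Set.range d
  · obtain ⟨i, rfl⟩ := hx
    simp [ofEnum_apply, d.injective.eq_iff]
  · simp only [ofEnum_eq_none f y d hx, reduceCtorEq, false_iff]
    rintro ⟨i, rfl, -⟩
    exact hx ⟨i, rfl⟩

lemma domSet_ofEnum (f : Fin r → Fin p) (y : Fin p ↪o Fin n) (d : Fin r ↪o Fin n) :
    domSet (ofEnum f y d) = Set.range d := by
  ext x
  by_cases hx : x ∈ Set.range d
  · obtain ⟨i, rfl⟩ := hx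
    simp [domSet, ofEnum_apply]
  · simp [domSet, ofEnum_eq_none f y d hx, hx]

lemma im_ofEnum {f : Fin r → Fin p} (hf : Surjective f) (y : Fin p ↪o Fin n)
    (d : Fin r ↪o Fin n) : im (ofEnum f y d) = Set.range y := by
  ext v
  simp only [im, Set.mem_ofPred_eq, ofEnum_eq_some_iff, Set.mem_range]
  constructor
  · rintro ⟨-, i, -, rfl⟩
    exact ⟨_, rfl⟩
  · rintro ⟨j, rfl⟩
    obtain ⟨i, hi⟩ := hf j.rev
    exact ⟨d i, i, rfl, by rw [hi, Fin.rev_rev]⟩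

lemma ncard_domSet_ofEnum (f : Fin r → Fin p) (y : Fin p ↪o Fin n) (d : Fin r ↪o Fin n) :
    (domSet (ofEnum f y d)).ncard = r := by
  rw [domSet_ofEnum, Set.ncard_range_of_injective d.injective, Nat.card_fin]

lemma ncard_im_ofEnum {f : Fin r → Fin p} (hf : Surjective f) (y : Fin p ↪o Fin n)
    (d : Fin r ↪o Fin n) : (im (ofEnum f y d)).ncard = p := by
  rw [im_ofEnum hf, Set.ncard_range_of_injective y.injective, Nat.card_fin]

lemma isAntitone_ofEnum {f : Fin r → Fin p} (hf : Monotone f) (y : Fin p ↪o Fin n)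
    (d : Fin r ↪o Fin n) : IsAntitone (ofEnum f y d) := by
  intro x x' v v' hx hx' hxx'
  obtain ⟨i, rfl, rfl⟩ := (ofEnum_eq_some_iff f y d).1 hx
  obtain ⟨i', rfl, rfl⟩ := (ofEnum_eq_some_iff f y d).1 hx'
  exact y.monotone (Fin.rev_le_rev.2 (hf (d.le_iff_le.1 hxx')))

lemma isDecreasing_ofEnum (f : Fin r → Fin p) {y : Fin p ↪o Fin n} {d : Fin r ↪o Fin n}
    (hyd : ∀ i j, y i ≤ d j) : IsDecreasing (ofEnum f y d) := by
  intro x v hx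
  obtain ⟨i, rfl, rfl⟩ := (ofEnum_eq_some_iff f y d).1 hx
  exact hyd _ i

lemma ofEnum_inj {f f' : Fin r → Fin p} (hf : Surjective f) (hf' : Surjective f')
    {y y' : Fin p ↪o Fin n} {d d' : Fin r ↪o Fin n} (h : ofEnum f y d = ofEnum f' y' d') :
    f = f' ∧ y = y' ∧ d = d' := by
  have hd : d = d' := OrderEmbedding.range_inj.1 <| by
    rw [← domSet_ofEnum f y d, h, domSet_ofEnum]
  have hy : y = y' := OrderEmbedding.range_inj.1 <| by
    rw [← im_ofEnum hf y d, h, im_ofEnum hf']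
  subst hd hy
  refine ⟨funext fun i => ?_, rfl, rfl⟩
  simpa only [ofEnum_apply, Option.some_inj, y.injective.eq_iff, Fin.rev_inj]
    using congrFun h (d i)

lemma le_of_mem_im_of_mem_domSet {ρ : PT n} (hanti : IsAntitone ρ) (hdec : IsDecreasing ρ)
    {v x : Fin n} (hv : v ∈ im ρ) (hx : x ∈ domSet ρ) : v ≤ x := by
  obtain ⟨x', hx'⟩ := hv
  obtain ⟨w, hw⟩ := Option.ne_none_iff_exists'.1 hx
  rcases le_total x' x with h | h
  · exact (hdec x' v hx').trans h
  · exact (hanti x x' w v hw hx' h).trans (hdec x w hw)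

lemma Set.Finite.exists_orderEmbedding_range_eq {α : Type*} [LinearOrder α] {s : Set α}
    (hs : s.Finite) {k : ℕ} (hk : s.ncard = k) : ∃ e : Fin k ↪o α, Set.range e = s := by
  obtain ⟨t, rfl⟩ := hs.exists_finset_coe
  rw [Set.ncard_coe_finset] at hk
  exact ⟨t.orderEmbOfFin hk, t.range_orderEmbOfFin hk⟩

lemma exists_ofEnum_eq {ρ : PT n} (hanti : IsAntitone ρ) (hdec : IsDecreasing ρ)
    (hr : (domSet ρ).ncard = r) (hp : (im ρ).ncard = p) :
    ∃ f : Fin r → Fin p, Monotone f ∧ Surjective f ∧ ∃ y : Fin p ↪o Fin n,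
      ∃ d : Fin r ↪o Fin n, (∀ i j, y i ≤ d j) ∧ ofEnum f y d = ρ := by
  obtain ⟨d, hd⟩ := (Set.toFinite _).exists_orderEmbedding_range_eq hr
  obtain ⟨y, hy⟩ := (Set.toFinite _).exists_orderEmbedding_range_eq hp
  have hval (i : Fin r) : ∃ j, ρ (d i) = some (y j) := by
    obtain ⟨v, hv⟩ := Option.ne_none_iff_exists'.1 (hd ▸ Set.mem_range_self i : d i ∈ domSet ρ)
    obtain ⟨j, rfl⟩ : v ∈ Set.range y := hy ▸ ⟨d i, hv⟩
    exact ⟨j, hv⟩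
  choose g hg using hval
  refine ⟨fun i => (g i).rev, fun i i' hii' => ?_, fun j => ?_, y, d, fun j i => ?_, ?_⟩
  · exact Fin.rev_le_rev.2 (y.le_iff_le.1 (hanti _ _ _ _ (hg i) (hg i') (d.monotone hii')))
  · obtain ⟨x, hx⟩ : y j.rev ∈ im ρ := hy ▸ Set.mem_range_self _
    obtain ⟨i, rfl⟩ : x ∈ Set.range d := hd ▸ (show x ∈ domSet ρ by simp [domSet, hx])
    refine ⟨i, show (g i).rev = j from ?_⟩
    rw [y.injective (Option.some_inj.1 ((hg i).symm.trans hx)), Fin.rev_rev]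
  · exact le_of_mem_im_of_mem_domSet hanti hdec (hy ▸ Set.mem_range_self j)
      (hd ▸ Set.mem_range_self i)
  · funext x
    by_cases hx : x ∈ Set.range d
    · obtain ⟨i, rfl⟩ := hx
      rw [ofEnum_apply, Fin.rev_rev, hg]
    · rw [ofEnum_eq_none _ _ _ hx, eq_comm]
      by_contra h
      exact hx (hd ▸ h)

end Enumerations

theorem ncard_antitone_decreasing_eq (n r p : ℕ) :
    {ρ : PT n | IsAntitone ρ ∧ IsDecreasing ρ ∧ (domSet ρ).ncard = r ∧ (im ρ).ncard = p}.ncard =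
      Nat.card {f : Fin r → Fin p // Monotone f ∧ Surjective f} *
        Nat.card (SeparatedPairs n p r) := by
  rw [← Nat.card_prod, ← Nat.card_coe_set_eq]
  refine (Nat.card_eq_of_bijective (fun fyd => ⟨ofEnum fyd.1.1 fyd.2.1.1 fyd.2.1.2,
    isAntitone_ofEnum fyd.1.2.1 _ _, isDecreasing_ofEnum _ fyd.2.2, ncard_domSet_ofEnum _ _ _,
    ncard_im_ofEnum fyd.1.2.2 _ _⟩) ⟨?_, ?_⟩).symm
  · rintro ⟨⟨f, hf⟩, ⟨y, d⟩, _⟩ ⟨⟨f', hf'⟩, ⟨y', d'⟩, _⟩ h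
    obtain ⟨rfl, rfl, rfl⟩ := ofEnum_inj hf.2 hf'.2 (congrArg Subtype.val h)
    rfl
  · rintro ⟨ρ, hanti, hdec, hr, hp⟩
    obtain ⟨f, hmono, hsurj, y, d, hyd, rfl⟩ := exists_ofEnum_eq hanti hdec hr hp
    exact ⟨⟨⟨f, hmono, hsurj⟩, ⟨y, d⟩, hyd⟩, rfl⟩

/-- The number of antitone order-decreasing partial transformations of `[n]` with
domain of size `r` and image of size `p` equals `C(r−1,p−1)·C(n+1,r+p)`. -/
theorem stmt3 (n r p : ℕ) (hp : 1 ≤ p) (hpr : p ≤ r) :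
    Set.ncard {ρ : PT n | IsAntitone ρ ∧ IsDecreasing ρ ∧
        (domSet ρ).ncard = r ∧ (im ρ).ncard = p} =
      Nat.choose (r - 1) (p - 1) * Nat.choose (n + 1) (r + p) := by
  obtain ⟨p, rfl⟩ : ∃ p', p = p' + 1 := ⟨p - 1, by omega⟩
  obtain ⟨r, rfl⟩ : ∃ r', r = r' + 1 := ⟨r - 1, by omega⟩
  rw [ncard_antitone_decreasing_eq, card_monotone_surjective, SeparatedPairs.card,
    Nat.add_sub_cancel, Nat.add_sub_cancel, add_comm (r + 1)]
end

section
/- Every monotone order-decreasing partial transformation of [n] of height (image size) strictly greater than ⌈n/2⌉ is isotone. -/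
/-- Every monotone order-decreasing partial transformation of `[n]` of height strictly
greater than `⌈n/2⌉` is isotone. -/
theorem stmt7 (n : ℕ) (ρ : PT n) (h : IsDORP ρ) (hh : (n + 1) / 2 < height ρ) :
    IsIsotone ρ := by
  classical
  obtain ⟨hdec, hmono | hanti⟩ := h
  · exact hmono
  exfalso
  have hfin : (im ρ).Finite := Set.toFinite _
  have hpos : 0 < height ρ := lt_of_le_of_lt (Nat.zero_le _) hh
  have hne : (im ρ).Nonempty := by
    rw [← Set.ncard_pos hfin]; exact hpos
  have hn : 0 < n := by
    obtain ⟨y, _⟩ := hne; exact y.pos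
  set F := hfin.toFinset with hF
  have hFne : F.Nonempty := hfin.toFinset_nonempty.mpr hne
  set ymax := F.max' hFne with hym
  have hymem : ymax ∈ im ρ := hfin.mem_toFinset.mp (F.max'_mem hFne)
  have hle : ∀ y ∈ im ρ, y ≤ ymax := fun y hy =>
    F.le_max' y (hfin.mem_toFinset.mpr hy)
  let g : Fin n → Fin n := fun y => if h : y ∈ im ρ then h.choose else ⟨0, hn⟩
  have hgspec : ∀ y (hy : y ∈ im ρ), ρ (g y) = some y := by
    intro y hy
    simp only [g, dif_pos hy]
    exact hy.choose_spec
  set xmax := g ymax with hxm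
  have hyx : ymax ≤ xmax := hdec _ _ (hgspec _ hymem)
  have hgel : ∀ y (hy : y ∈ im ρ), xmax ≤ g y := by
    intro y hy
    by_contra hlt
    push_neg at hlt
    have h1 : ymax ≤ y := hanti _ _ _ _ (hgspec _ hy) (hgspec _ hymem) hlt.le
    have h2 : y = ymax := le_antisymm (hle y hy) h1
    subst h2
    exact lt_irrefl _ hlt
  have hinj : Set.InjOn g (im ρ) := by
    intro a ha b hb hab
    have h1 := hgspec a ha
    have h2 := hgspec b hb
    rw [hab, h2] at h1
    exact (Option.some_inj.mp h1).symm
  have card1 : height ρ ≤ (ymax : ℕ) + 1 := by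
    have hsub : im ρ ⊆ Set.Iic ymax := fun y hy => hle y hy
    calc height ρ ≤ (Set.Iic ymax).ncard := Set.ncard_le_ncard hsub (Set.toFinite _)
      _ = (ymax : ℕ) + 1 := by
          rw [← Finset.coe_Iic, Set.ncard_coe_finset, Fin.card_Iic]
  have card2 : height ρ ≤ n - (xmax : ℕ) := by
    have hsub : g '' im ρ ⊆ Set.Ici xmax := by
      rintro _ ⟨y, hy, rfl⟩; exact hgel y hy
    calc height ρ = (g '' im ρ).ncard := (Set.ncard_image_of_injOn hinj).symm
      _ ≤ (Set.Ici xmax).ncard := Set.ncard_le_ncard hsub (Set.toFinite _)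
      _ = n - (xmax : ℕ) := by
          rw [← Finset.coe_Ici, Set.ncard_coe_finset, Fin.card_Ici]
  have hyx' : (ymax : ℕ) ≤ (xmax : ℕ) := hyx
  have hxn : (xmax : ℕ) < n := xmax.isLt
  omega
end

section
/- The monoid DORPₙ of monotone order-decreasing partial transformations of [n] is R-trivial: if ρ, σ ∈ DORPₙ generate the same principal right ideal (ρ·DORPₙ¹ = σ·DORPₙ¹), then ρ = σ. -/
/-
Since `idPT n ∈ DORPₙ`, equal right ideals give `σ = ρτ` and `ρ = στ'` with `τ, τ'` order-decreasing.
Then a point `x ↦ y` of `ρ` is sent by `τ` to some `z ≤ y`, and `τ'` must send `z` back to `y ≤ z`; hence `z = y`, and `σ = ρ`.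
-/

theorem isDORP_idPT (n : ℕ) : IsDORP (idPT n) := by
  refine ⟨fun x y hxy => ?_, Or.inl fun x x' y y' hx hx' hle => ?_⟩
  · cases Option.some.inj hxy
    exact le_rfl
  · cases Option.some.inj hx
    cases Option.some.inj hx'
    exact hle

theorem comp_idPT {n : ℕ} (ρ : PT n) : comp ρ (idPT n) = ρ := by
  funext x
  show (ρ x).bind (idPT n) = ρ x
  cases ρ x <;> rfl

theorem IsDecreasing.bind_eq_self_of_bind_bind_eq_self {n : ℕ} {τ τ' : PT n}
    (hτ : IsDecreasing τ) (hτ' : IsDecreasing τ') {a : Option (Fin n)}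
    (h : (a.bind τ).bind τ' = a) : a.bind τ = a := by
  cases a with
  | none => rfl
  | some y =>
    change (τ y).bind τ' = some y at h
    show τ y = some y
    cases hy : τ y with
    | none => rw [hy] at h; cases h
    | some z =>
      rw [hy] at h
      rw [le_antisymm (hτ y z hy) (hτ' z y h)]

theorem eq_of_comp_eq_of_comp_eq {n : ℕ} {ρ σ τ τ' : PT n}
    (hτ : IsDecreasing τ) (hτ' : IsDecreasing τ')
    (hσ : comp ρ τ = σ) (hρ : comp σ τ' = ρ) : ρ = σ := by
  funext x
  have hx : ((ρ x).bind τ).bind τ' = ρ x := by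
    rw [← hσ] at hρ
    exact congrFun hρ x
  rw [← hσ]
  exact (hτ.bind_eq_self_of_bind_bind_eq_self hτ' hx).symm

theorem stmt8_general (n : ℕ) (ρ σ : PT n)
    (h : ∀ x : PT n, (∃ τ, IsDORP τ ∧ comp ρ τ = x) ↔ (∃ τ, IsDORP τ ∧ comp σ τ = x)) :
    ρ = σ := by
  obtain ⟨τ, hτ, hσ⟩ := (h σ).mpr ⟨idPT n, isDORP_idPT n, comp_idPT σ⟩
  obtain ⟨τ', hτ', hρ⟩ := (h ρ).mp ⟨idPT n, isDORP_idPT n, comp_idPT ρ⟩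
  exact eq_of_comp_eq_of_comp_eq hτ.1 hτ'.1 hσ hρ

/-- `DORPₙ` is `R`-trivial: two elements generating the same principal right ideal
are equal (note `idPT n ∈ DORPₙ`, so `ρ·DORPₙ¹ = ρ·DORPₙ`). -/
theorem stmt8 (n : ℕ) (ρ σ : PT n) (hρ : IsDORP ρ) (hσ : IsDORP σ)
    (h : ∀ x : PT n, (∃ τ, IsDORP τ ∧ comp ρ τ = x) ↔ (∃ τ, IsDORP τ ∧ comp σ τ = x)) :
    ρ = σ :=
  stmt8_general n ρ σ h
end

section
/- In the monoid DORPₙ of monotone order-decreasing partial transformations of [n], an element is regular if and only if it is an idempotent. In particular DORPₙ is not a regular semigroup for n ≥ 2. -/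
/-!
If `ρ τ ρ = ρ` and `x ρ = y`, then `y τ ρ = y`; as both maps are decreasing,
`y ≥ y τ ≥ (y τ) ρ = y`, so `ρ` fixes every point of its image, i.e. `ρ` is idempotent.
The partial map `1 ↦ 0` lies in `DORPₙ` but does not fix its image point.
-/

namespace PT

variable {n : ℕ}

lemma comp_apply_of_eq_some (ρ σ : PT n) {x y : Fin n} (hx : ρ x = some y) :
    comp ρ σ x = σ y := by
  simp only [comp, hx]; rfl

lemma comp_apply_of_eq_none (ρ σ : PT n) {x : Fin n} (hx : ρ x = none) :
    comp ρ σ x = none := by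
  simp only [comp, hx]; rfl

lemma comp_apply_eq_some_iff {ρ σ : PT n} {x z : Fin n} :
    comp ρ σ x = some z ↔ ∃ y, ρ x = some y ∧ σ y = some z :=
  Option.bind_eq_some_iff

lemma comp_self_eq_self_iff {ρ : PT n} :
    comp ρ ρ = ρ ↔ ∀ x y, ρ x = some y → ρ y = some y := by
  constructor
  · intro h x y hx
    rw [← comp_apply_of_eq_some ρ ρ hx, h, hx]
  · intro h
    funext x
    cases hx : ρ x with
    | none => exact comp_apply_of_eq_none ρ ρ hx
    | some y => rw [comp_apply_of_eq_some ρ ρ hx, h x y hx]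

lemma apply_eq_self_of_comp_comp_eq {ρ τ : PT n} (hρ : IsDecreasing ρ) (hτ : IsDecreasing τ)
    (h : comp (comp ρ τ) ρ = ρ) {x y : Fin n} (hx : ρ x = some y) : ρ y = some y := by
  obtain ⟨z, hxz, hzy⟩ := comp_apply_eq_some_iff.mp ((congrFun h x).trans hx)
  obtain ⟨y', hxy', hy'z⟩ := comp_apply_eq_some_iff.mp hxz
  obtain rfl : y = y' := Option.some_injective _ (hx.symm.trans hxy')
  rwa [le_antisymm (hτ y z hy'z) (hρ z y hzy)] at hzy

lemma comp_self_eq_self_of_comp_comp_eq {ρ τ : PT n} (hρ : IsDecreasing ρ)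
    (hτ : IsDecreasing τ) (h : comp (comp ρ τ) ρ = ρ) : comp ρ ρ = ρ :=
  comp_self_eq_self_iff.mpr fun _ _ => apply_eq_self_of_comp_comp_eq hρ hτ h

theorem isRegular_iff_comp_self_eq_self {ρ : PT n} (hρ : IsDORP ρ) :
    (∃ τ, IsDORP τ ∧ comp (comp ρ τ) ρ = ρ) ↔ comp ρ ρ = ρ := by
  constructor
  · rintro ⟨τ, hτ, h⟩
    exact comp_self_eq_self_of_comp_comp_eq hρ.1 hτ.1 h
  · intro h
    exact ⟨ρ, hρ, by rw [h, h]⟩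

def single (a b : Fin n) : PT n := fun x => if x = a then some b else none

lemma single_apply_eq_some {a b x y : Fin n} : single a b x = some y ↔ x = a ∧ b = y := by
  simp [single]

lemma isDORP_single {a b : Fin n} (hba : b ≤ a) : IsDORP (single a b) := by
  refine ⟨fun x y hxy => ?_, Or.inl fun x x' y y' hxy hxy' _ => ?_⟩
  · obtain ⟨rfl, rfl⟩ := single_apply_eq_some.mp hxy
    exact hba
  · obtain ⟨-, rfl⟩ := single_apply_eq_some.mp hxy
    obtain ⟨-, rfl⟩ := single_apply_eq_some.mp hxy'
    rfl

lemma comp_single_self_ne {a b : Fin n} (hba : b ≠ a) :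
    comp (single a b) (single a b) ≠ single a b :=
  fun h => by simpa [single, hba] using comp_self_eq_self_iff.mp h a b (by simp [single])

end PT

/-- In `DORPₙ` an element is regular iff it is idempotent; in particular for `n ≥ 2`
`DORPₙ` is not a regular semigroup. -/
theorem stmt9 (n : ℕ) :
    (∀ ρ : PT n, IsDORP ρ →
        ((∃ τ, IsDORP τ ∧ comp (comp ρ τ) ρ = ρ) ↔ comp ρ ρ = ρ)) ∧
      (2 ≤ n → ∃ ρ : PT n, IsDORP ρ ∧ ¬∃ τ, IsDORP τ ∧ comp (comp ρ τ) ρ = ρ) := by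
  refine ⟨fun ρ hρ => PT.isRegular_iff_comp_self_eq_self hρ, fun hn => ?_⟩
  let a : Fin n := ⟨1, hn⟩
  let b : Fin n := ⟨0, by omega⟩
  have hba : b < a := Fin.mk_lt_mk.mpr Nat.zero_lt_one
  have hρ := PT.isDORP_single hba.le
  exact ⟨PT.single a b, hρ, fun hreg =>
    PT.comp_single_self_ne hba.ne ((PT.isRegular_iff_comp_self_eq_self hρ).mp hreg)⟩
end

section
/- For every ρ in DORPₙ there exists a partial transformation ρ′ of [n] such that ρρ′ρ = ρ, and both ρρ′ and ρ′ρ are idempotents lying in DORPₙ (in fact ρ′ρ is the identity map on im ρ). Thus DORPₙ is an inverse-ideal of the partial transformation monoid Pₙ. -/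
/-!
Take `ρ'` to send each `y ∈ im ρ` to its least preimage. Then `ρ'ρ` is the identity on `im ρ`,
hence `ρρ'ρ = ρ`, and both `ρρ'` and `ρ'ρ` are idempotent, as for any such pair. The map `ρρ'`
sends `x` to the least element of its `ρ`-fibre, which is at most `x`; it is isotone because
the fibres of a monotone `ρ` are ordered along the chain, so the minima of the fibres of
`x ≤ x'` cannot lie in the opposite order.
-/

-- Treat `PT n` as an abbreviation, so that applications `ρ x` unfold and `Option (Fin n)` instances apply.
attribute [reducible] PT

section

variable {n : ℕ}

theorem comp_assoc (ρ σ τ : PT n) : comp (comp ρ σ) τ = comp ρ (comp σ τ) :=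
  funext fun x => Option.bind_assoc (ρ x) σ τ

theorem comp_idem_of_comp_comp_eq_self {ρ σ : PT n} (h : comp (comp ρ σ) ρ = ρ) :
    comp (comp ρ σ) (comp ρ σ) = comp ρ σ := by
  rw [← comp_assoc, h]

theorem comp_idem_of_comp_comp_eq_self' {ρ σ : PT n} (h : comp (comp ρ σ) ρ = ρ) :
    comp (comp σ ρ) (comp σ ρ) = comp σ ρ := by
  rw [comp_assoc, ← comp_assoc ρ, h]

def IsPartialIdentity (ε : PT n) : Prop := ∀ x y, ε x = some y → y = x

theorem IsPartialIdentity.isDORP {ε : PT n} (hε : IsPartialIdentity ε) : IsDORP ε := by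
  refine ⟨fun x y h => (hε x y h).le, Or.inl fun x x' y y' h h' hle => ?_⟩
  rwa [hε x y h, hε x' y' h']

/-- Two points of the image whose preimages are ordered both ways coincide. -/
theorem eq_of_preimages_cross {ρ : PT n} (hρ : IsIsotone ρ ∨ IsAntitone ρ) {a b c d y y' : Fin n}
    (ha : ρ a = some y) (hb : ρ b = some y') (hc : ρ c = some y') (hd : ρ d = some y)
    (hab : a ≤ b) (hcd : c ≤ d) : y = y' := by
  rcases hρ with hiso | hanti
  · exact le_antisymm (hiso a b y y' ha hb hab) (hiso c d y' y hc hd hcd)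
  · exact le_antisymm (hanti c d y' y hc hd hcd) (hanti a b y y' ha hb hab)

def leastPreimage (ρ : PT n) : PT n := fun y =>
  if h : ∃ x, ρ x = some y then some (Fin.find (fun x => ρ x = some y) h) else none

theorem leastPreimage_eq_some_iff {ρ : PT n} {y m : Fin n} :
    leastPreimage ρ y = some m ↔ ρ m = some y ∧ ∀ x, ρ x = some y → m ≤ x := by
  by_cases h : ∃ x, ρ x = some y
  · rw [leastPreimage, dif_pos h, Option.some_inj, Fin.find_eq_iff]
    exact and_congr_right fun _ => forall_congr' fun x => by rw [imp_not_comm, not_lt]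
  · rw [leastPreimage, dif_neg h]
    exact iff_of_false (Option.some_ne_none m).symm fun hm => h ⟨m, hm.1⟩

theorem exists_leastPreimage_eq_some {ρ : PT n} {y : Fin n} (h : y ∈ im ρ) :
    ∃ m, leastPreimage ρ y = some m :=
  ⟨_, dif_pos h⟩

theorem leastPreimage_eq_none {ρ : PT n} {y : Fin n} (h : y ∉ im ρ) : leastPreimage ρ y = none :=
  dif_neg h

theorem comp_leastPreimage_apply_of_mem {ρ : PT n} {x : Fin n} (h : x ∈ im ρ) :
    comp (leastPreimage ρ) ρ x = some x := by
  obtain ⟨m, hm⟩ := exists_leastPreimage_eq_some h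
  rw [comp, hm, Option.bind_some, (leastPreimage_eq_some_iff.1 hm).1]

theorem comp_leastPreimage_eq_some_iff (ρ : PT n) (x y : Fin n) :
    comp (leastPreimage ρ) ρ x = some y ↔ y = x ∧ x ∈ im ρ := by
  by_cases hx : x ∈ im ρ
  · rw [comp_leastPreimage_apply_of_mem hx, Option.some_inj, eq_comm]
    exact (and_iff_left hx).symm
  · simp only [comp, leastPreimage_eq_none hx, Option.bind_none, reduceCtorEq, hx, and_false]

theorem comp_comp_leastPreimage (ρ : PT n) : comp (comp ρ (leastPreimage ρ)) ρ = ρ := by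
  funext x
  rw [comp_assoc]
  rcases hx : ρ x with _ | y
  · simp only [comp, hx, Option.bind_none]
  · rw [comp, hx, Option.bind_some, comp_leastPreimage_apply_of_mem ⟨x, hx⟩]

theorem isDecreasing_comp_leastPreimage (ρ : PT n) : IsDecreasing (comp ρ (leastPreimage ρ)) := by
  intro x m h
  obtain ⟨y, hy, hm⟩ := Option.bind_eq_some_iff.1 h
  exact (leastPreimage_eq_some_iff.1 hm).2 x hy

theorem isIsotone_comp_leastPreimage {ρ : PT n} (hρ : IsIsotone ρ ∨ IsAntitone ρ) :
    IsIsotone (comp ρ (leastPreimage ρ)) := by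
  intro x x' m m' h h' hle
  obtain ⟨y, hy, hm⟩ := Option.bind_eq_some_iff.1 h
  obtain ⟨y', hy', hm'⟩ := Option.bind_eq_some_iff.1 h'
  obtain ⟨hρm, hm_min⟩ := leastPreimage_eq_some_iff.1 hm
  have hρm' := (leastPreimage_eq_some_iff.1 hm').1
  by_contra! hlt
  have hyy' : y = y' := eq_of_preimages_cross hρ hy hy' hρm' hρm hle hlt.le
  exact hlt.not_ge (hm_min m' (hyy' ▸ hρm'))

end

/-- For every `ρ ∈ DORPₙ` there is `ρ' ∈ Pₙ` with `ρρ'ρ = ρ`, and both `ρρ'` and `ρ'ρ`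
are idempotents lying in `DORPₙ`; in fact `ρ'ρ` is the identity on `im ρ`. Thus
`DORPₙ` is an inverse-ideal of `Pₙ`. -/
theorem stmt11 (n : ℕ) (ρ : PT n) (h : IsDORP ρ) :
    ∃ ρ' : PT n,
      comp (comp ρ ρ') ρ = ρ ∧
      IsDORP (comp ρ ρ') ∧ comp (comp ρ ρ') (comp ρ ρ') = comp ρ ρ' ∧
      IsDORP (comp ρ' ρ) ∧ comp (comp ρ' ρ) (comp ρ' ρ) = comp ρ' ρ ∧
      (∀ x y : Fin n, comp ρ' ρ x = some y ↔ (y = x ∧ x ∈ im ρ)) := by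
  have hreg := comp_comp_leastPreimage ρ
  refine ⟨leastPreimage ρ, hreg,
    ⟨isDecreasing_comp_leastPreimage ρ, Or.inl (isIsotone_comp_leastPreimage h.2)⟩,
    comp_idem_of_comp_comp_eq_self hreg, ?_, comp_idem_of_comp_comp_eq_self' hreg,
    comp_leastPreimage_eq_some_iff ρ⟩
  exact IsPartialIdentity.isDORP fun x y hxy => ((comp_leastPreimage_eq_some_iff ρ x y).1 hxy).1
end

section
/- For ρ, σ in DORPₙ: ρ L* σ if and only if im ρ = im σ, and ρ R* σ if and only if ker ρ = ker σ (same domain and same partition of the domain by fibers). -/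
/-- The relation `L*` on `DORPₙ` (note `idPT n ∈ DORPₙ`, so quantifying over `DORPₙ`
is the same as over `DORPₙ¹`). -/
def LStar {n : ℕ} (ρ σ : PT n) : Prop :=
  ∀ τ₁ τ₂ : PT n, IsDORP τ₁ → IsDORP τ₂ →
    (comp ρ τ₁ = comp ρ τ₂ ↔ comp σ τ₁ = comp σ τ₂)

/-- The relation `R*` on `DORPₙ`. -/
def RStar {n : ℕ} (ρ σ : PT n) : Prop :=
  ∀ τ₁ τ₂ : PT n, IsDORP τ₁ → IsDORP τ₂ →
    (comp τ₁ ρ = comp τ₂ ρ ↔ comp τ₁ σ = comp τ₂ σ)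

/-!
Composition on the right, `ρ ↦ ρτ`, only sees `τ` on `im ρ`, so equal images give `L*`;
conversely the partial identity of `{y}` and the empty map agree after `ρ` exactly when
`y ∉ im ρ`. Composition on the left, `τ ↦ τρ`, only sees the kernel of `ρ`, so equal kernels give
`R*`; conversely the partial identity of `{a}` and the empty map agree before `ρ` exactly when
`ρ a` is undefined, and the partial identity of `{a, b}` and the constant map `{a, b} → min a b` agree
before `ρ` exactly when `ρ a = ρ b`. All four test maps lie in `DORPₙ`.
-/

variable {n : ℕ}

lemma PT.ext_iff {ρ σ : PT n} : ρ = σ ↔ ∀ x, ρ x = σ x := funext_iff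

@[simp] lemma PT.some_bind (a : Fin n) (f : PT n) : (some a).bind f = f a := rfl

@[simp] lemma PT.none_bind (f : PT n) : (none : Option (Fin n)).bind f = none := rfl

def partialId (A : Finset (Fin n)) : PT n := fun z => if z ∈ A then some z else none

def constOn (A : Finset (Fin n)) (m : Fin n) : PT n := fun z => if z ∈ A then some m else none

lemma isDORP_partialId (A : Finset (Fin n)) : IsDORP (partialId A) := by
  refine ⟨fun x y h => ?_, Or.inl fun x x' y y' h h' hle => ?_⟩
  · by_cases hx : x ∈ A <;> simp_all [partialId]
  · by_cases hx : x ∈ A <;> by_cases hx' : x' ∈ A <;> simp_all [partialId]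

lemma isDORP_constOn {A : Finset (Fin n)} {m : Fin n} (hm : ∀ z ∈ A, m ≤ z) :
    IsDORP (constOn A m) := by
  refine ⟨fun x y h => ?_, Or.inl fun x x' y y' h h' _ => ?_⟩
  · by_cases hx : x ∈ A <;> simp_all [constOn]
  · by_cases hx : x ∈ A <;> by_cases hx' : x' ∈ A <;> simp_all [constOn]

lemma comp_left_eq_iff_eqOn_im (ρ τ₁ τ₂ : PT n) :
    comp ρ τ₁ = comp ρ τ₂ ↔ Set.EqOn τ₁ τ₂ (im ρ) := by
  refine ⟨fun h y ⟨x, hx⟩ => by simpa [comp, hx] using congrFun h x, fun h => funext fun x => ?_⟩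
  cases hx : ρ x with
  | none => simp [comp, hx]
  | some y => simpa [comp, hx] using h ⟨x, hx⟩

lemma eqOn_partialId_singleton_empty_iff (y : Fin n) (S : Set (Fin n)) :
    Set.EqOn (partialId {y}) (partialId ∅) S ↔ y ∉ S := by
  refine ⟨fun h hy => by simpa [partialId] using h hy, fun hy z hz => ?_⟩
  have : z ≠ y := fun h => hy (h ▸ hz)
  simp [partialId, this]

lemma lStar_iff_im_eq (ρ σ : PT n) : LStar ρ σ ↔ im ρ = im σ := by
  refine ⟨fun h => Set.ext fun y => ?_, fun h τ₁ τ₂ _ _ => ?_⟩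
  · have := h _ _ (isDORP_partialId {y}) (isDORP_partialId ∅)
    simpa only [comp_left_eq_iff_eqOn_im, eqOn_partialId_singleton_empty_iff, not_iff_not]
      using this
  · rw [comp_left_eq_iff_eqOn_im, comp_left_eq_iff_eqOn_im, h]

lemma comp_right_eq_iff_of_kerEq {ρ σ : PT n} (hk : kerEq ρ σ) (τ₁ τ₂ : PT n) :
    comp τ₁ ρ = comp τ₂ ρ ↔ comp τ₁ σ = comp τ₂ σ := by
  simp only [PT.ext_iff, comp]
  refine forall_congr' fun x => ?_
  cases τ₁ x <;> cases τ₂ x <;> simp [hk.1, hk.2, eq_comm]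

lemma comp_partialId_singleton_eq_empty_iff (ρ : PT n) (a : Fin n) :
    comp (partialId {a}) ρ = comp (partialId ∅) ρ ↔ ρ a = none := by
  refine ⟨fun h => by simpa [comp, partialId] using congrFun h a, fun h => funext fun z => ?_⟩
  by_cases hz : z = a <;> simp [comp, partialId, hz, h]

lemma comp_partialId_pair_eq_constOn_iff (ρ : PT n) (a b : Fin n) :
    comp (partialId {a, b}) ρ = comp (constOn {a, b} (min a b)) ρ ↔ ρ a = ρ b := by
  have hfiber : ρ a = ρ b ↔ ∀ z ∈ ({a, b} : Finset (Fin n)), ρ z = ρ (min a b) := by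
    rcases min_choice a b with hm | hm <;>
      simp only [Finset.forall_mem_insert, Finset.mem_singleton, forall_eq, hm, true_and,
        and_true, eq_comm (a := ρ b)]
  rw [hfiber, PT.ext_iff]
  refine forall_congr' fun z => ?_
  by_cases hz : z ∈ ({a, b} : Finset (Fin n)) <;> simp [comp, partialId, constOn, hz]

lemma rStar_iff_kerEq (ρ σ : PT n) : RStar ρ σ ↔ kerEq ρ σ := by
  refine ⟨fun h => ⟨fun a => ?_, fun a b => ?_⟩, fun hk τ₁ τ₂ _ _ =>
    comp_right_eq_iff_of_kerEq hk τ₁ τ₂⟩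
  · simpa only [comp_partialId_singleton_eq_empty_iff] using
      h _ _ (isDORP_partialId {a}) (isDORP_partialId ∅)
  · have hmin : ∀ z ∈ ({a, b} : Finset (Fin n)), min a b ≤ z := by simp
    simpa only [comp_partialId_pair_eq_constOn_iff] using
      h _ _ (isDORP_partialId {a, b}) (isDORP_constOn hmin)

theorem stmt12_general (n : ℕ) (ρ σ : PT n) :
    (LStar ρ σ ↔ im ρ = im σ) ∧ (RStar ρ σ ↔ kerEq ρ σ) :=
  ⟨lStar_iff_im_eq ρ σ, rStar_iff_kerEq ρ σ⟩

/-- In `DORPₙ`: `ρ L* σ` iff `im ρ = im σ`, and `ρ R* σ` iff `ker ρ = ker σ`. -/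
theorem stmt12 (n : ℕ) (ρ σ : PT n) (hρ : IsDORP ρ) (hσ : IsDORP σ) :
    (LStar ρ σ ↔ im ρ = im σ) ∧ (RStar ρ σ ↔ kerEq ρ σ) :=
  stmt12_general n ρ σ
end

section
/- The number of idempotents in the monoid DORPₙ equals (3ⁿ + 1)/2. -/
section Aux

variable {n : ℕ}

lemma fin3 : ∀ v : Fin 3, v = 0 ∨ v = 1 ∨ v = 2 := by decide

/-- Ternary strings whose first nonzero letter is `2`. -/
def P3 (g : Fin n → Fin 3) : Prop := ∀ x, g x = 1 → ∃ y, y < x ∧ g y = 2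

instance : DecidablePred (P3 (n := n)) := fun g => by
  unfold P3; exact inferInstance

/-- Encoding of a partial transformation as a ternary string. -/
def enc (ρ : PT n) : Fin n → Fin 3 := fun x =>
  (ρ x).elim 0 (fun y => if y = x then 2 else 1)

lemma enc_none {n : ℕ} {ρ : PT n} {x : Fin n} (h : ρ x = none) : enc ρ x = 0 := by
  simp [enc, h]

lemma enc_some {n : ℕ} {ρ : PT n} {x y : Fin n} (h : ρ x = some y) :
    enc ρ x = if y = x then 2 else 1 := by
  simp [enc, h]

/-- Decoding of a ternary string back into a partial transformation. -/
noncomputable def dec3 (g : Fin n → Fin 3) : PT n := fun x =>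
  if g x = 2 then some x
  else if h : g x = 1 ∧ (Finset.univ.filter (fun y => y < x ∧ g y = 2)).Nonempty then
    some ((Finset.univ.filter (fun y => y < x ∧ g y = 2)).max' h.2)
  else none

lemma idem_fix {ρ : PT n} (h : comp ρ ρ = ρ) {x y : Fin n} (hxy : ρ x = some y) :
    ρ y = some y := by
  have := congrFun h x
  simp only [comp, hxy, Option.bind] at this
  exact this

lemma dec3_zero {g : Fin n → Fin 3} {x : Fin n} (hx : g x = 0) : dec3 g x = none := by
  unfold dec3
  rw [if_neg (by simp [hx]), dif_neg (by simp [hx])]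

lemma dec3_two {g : Fin n → Fin 3} {x : Fin n} (hx : g x = 2) : dec3 g x = some x := by
  unfold dec3
  rw [if_pos hx]

lemma dec3_one {g : Fin n → Fin 3} (hg : P3 g) {x : Fin n} (hx : g x = 1) :
    ∃ M, dec3 g x = some M ∧ M < x ∧ g M = 2 ∧ ∀ z, z < x → g z = 2 → z ≤ M := by
  obtain ⟨y, hy, hy2⟩ := hg x hx
  have hne : (Finset.univ.filter (fun y => y < x ∧ g y = 2)).Nonempty :=
    ⟨y, by simp [hy, hy2]⟩
  have hmem := Finset.mem_filter.mp (Finset.max'_mem _ hne)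
  refine ⟨_, ?_, hmem.2.1, hmem.2.2, fun z hz hz2 => ?_⟩
  · unfold dec3
    rw [if_neg (by simp [hx]), dif_pos ⟨hx, hne⟩]
  · exact Finset.le_max' _ z (by simp [hz, hz2])

lemma dec3_good {g : Fin n → Fin 3} (hg : P3 g) :
    IsDecreasing (dec3 g) ∧ IsIsotone (dec3 g) ∧ comp (dec3 g) (dec3 g) = dec3 g := by
  -- a case analysis helper
  have hcases : ∀ x y : Fin n, dec3 g x = some y →
      (g x = 2 ∧ y = x) ∨ (g x = 1 ∧ y < x ∧ g y = 2 ∧ ∀ z, z < x → g z = 2 → z ≤ y) := by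
    intro x y hxy
    rcases fin3 (g x) with h0 | h1 | h2
    · rw [dec3_zero h0] at hxy; exact absurd hxy (by simp)
    · obtain ⟨M, hM, hMx, hM2, hMmax⟩ := dec3_one hg h1
      rw [hM] at hxy
      have : M = y := by injection hxy
      subst this
      exact Or.inr ⟨h1, hMx, hM2, hMmax⟩
    · rw [dec3_two h2] at hxy
      have : x = y := by injection hxy
      subst this
      exact Or.inl ⟨h2, rfl⟩
  refine ⟨?_, ?_, ?_⟩
  · intro x y hxy
    rcases hcases x y hxy with ⟨_, heq⟩ | ⟨_, hlt, _⟩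
    · exact le_of_eq heq
    · exact le_of_lt hlt
  · intro x x' y y' hxy hxy' hle
    rcases hcases x y hxy with ⟨hx2, heq⟩ | ⟨hx1, hlt, hy2, _⟩
    · subst heq
      rcases hcases x' y' hxy' with ⟨_, heq'⟩ | ⟨hx1', hlt', hy2', hmax'⟩
      · subst heq'; exact hle
      · -- g y = 2, y ≤ x', y ≠ x' since g x' = 1
        have hne : y ≠ x' := fun h => by rw [h, hx1'] at hx2; exact absurd hx2 (by decide)
        exact hmax' y (lt_of_le_of_ne hle hne) hx2
    · rcases hcases x' y' hxy' with ⟨_, heq'⟩ | ⟨hx1', hlt', hy2', hmax'⟩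
      · subst heq'; exact le_of_lt (lt_of_lt_of_le hlt hle)
      · exact hmax' y (lt_of_lt_of_le hlt hle) hy2
  · funext x
    show (dec3 g x).bind (dec3 g) = dec3 g x
    rcases hxy : dec3 g x with _ | y
    · rfl
    · show dec3 g y = some y
      rcases hcases x y hxy with ⟨hx2, heq⟩ | ⟨_, _, hy2, _⟩
      · subst heq; exact dec3_two hx2
      · exact dec3_two hy2

lemma enc_dec3 {g : Fin n → Fin 3} (hg : P3 g) : enc (dec3 g) = g := by
  funext x
  rcases fin3 (g x) with h | h | h
  · rw [h, enc_none (dec3_zero h)]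
  · obtain ⟨M, hM, hMx, _, _⟩ := dec3_one hg h
    rw [h, enc_some hM, if_neg (ne_of_lt hMx)]
  · rw [h, enc_some (dec3_two h), if_pos rfl]

/-- Any antitone decreasing idempotent is isotone. -/
lemma anti_to_iso {ρ : PT n} (ha : IsAntitone ρ) (hi : comp ρ ρ = ρ) : IsIsotone ρ := by
  intro x x' y y' hxy hxy' _
  have hy : ρ y = some y := idem_fix hi hxy
  have hy' : ρ y' = some y' := idem_fix hi hxy'
  rcases le_total y y' with h | h
  · exact h
  · exact ha y' y y' y hy' hy h

/-- The encoding is a bijection from isotone decreasing idempotents onto `P3`. -/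
lemma enc_bijOn :
    Set.BijOn (enc (n := n))
      {ρ : PT n | IsDecreasing ρ ∧ IsIsotone ρ ∧ comp ρ ρ = ρ}
      {g : Fin n → Fin 3 | P3 g} := by
  constructor
  · -- MapsTo
    rintro ρ ⟨hdec, _, hidem⟩ x hx1
    rcases hxy : ρ x with _ | y
    · rw [enc_none hxy] at hx1; exact absurd hx1 (by decide)
    · rw [enc_some hxy] at hx1
      have hyx : y ≠ x := by
        intro h; rw [if_pos h] at hx1; exact absurd hx1 (by decide)
      refine ⟨y, lt_of_le_of_ne (hdec x y hxy) hyx, ?_⟩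
      rw [enc_some (idem_fix hidem hxy), if_pos rfl]
  constructor
  · -- InjOn
    rintro ρ ⟨hdecρ, hisoρ, hidemρ⟩ σ ⟨hdecσ, hisoσ, hidemσ⟩ he
    have heq := fun x => congrFun he x
    -- characterize values from encodings
    have key : ∀ (τ : PT n), IsDecreasing τ → comp τ τ = τ → ∀ x,
        (enc τ x = 0 → τ x = none) ∧ (enc τ x = 2 → τ x = some x) ∧
        (enc τ x = 1 → ∃ y, τ x = some y ∧ y < x) := by
      intro τ hdec hidem x
      rcases hxy : τ x with _ | y
      · rw [enc_none hxy]
        exact ⟨fun _ => rfl, fun h => absurd h (by decide), fun h => absurd h (by decide)⟩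
      · rw [enc_some hxy]
        by_cases hy : y = x
        · rw [if_pos hy]
          exact ⟨fun h => absurd h (by decide), fun _ => by rw [hy],
            fun h => absurd h (by decide)⟩
        · rw [if_neg hy]
          exact ⟨fun h => absurd h (by decide), fun h => absurd h (by decide),
            fun _ => ⟨y, rfl, lt_of_le_of_ne (hdec x y hxy) hy⟩⟩
    funext x
    rcases fin3 (enc ρ x) with h | h | h
    · rw [(key ρ hdecρ hidemρ x).1 h, (key σ hdecσ hidemσ x).1 (by rw [← heq x]; exact h)]
    · obtain ⟨y, hy, hylt⟩ := (key ρ hdecρ hidemρ x).2.2 h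
      obtain ⟨y', hy', hylt'⟩ := (key σ hdecσ hidemσ x).2.2 (by rw [← heq x]; exact h)
      have hfixρy : ρ y = some y := idem_fix hidemρ hy
      have hfixσy' : σ y' = some y' := idem_fix hidemσ hy'
      -- enc ρ y = 2, hence enc σ y = 2, hence σ y = some y
      have hσy : σ y = some y := by
        apply (key σ hdecσ hidemσ y).2.1
        rw [← heq y, enc_some hfixρy, if_pos rfl]
      have hρy' : ρ y' = some y' := by
        apply (key ρ hdecρ hidemρ y').2.1
        rw [heq y', enc_some hfixσy', if_pos rfl]
      have h1 : y ≤ y' := hisoσ y x y y' hσy hy' (le_of_lt hylt)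
      have h2 : y' ≤ y := hisoρ y' x y' y hρy' hy (le_of_lt hylt')
      rw [hy, hy', le_antisymm h1 h2]
    · rw [(key ρ hdecρ hidemρ x).2.1 h, (key σ hdecσ hidemσ x).2.1 (by rw [← heq x]; exact h)]
  · -- SurjOn
    intro g hg
    obtain ⟨hdec, hiso, hidem⟩ := dec3_good hg
    exact ⟨dec3 g, ⟨hdec, hiso, hidem⟩, enc_dec3 hg⟩

/-- flip `1 ↔ 2`, fix `0`. -/
def fl : Fin 3 → Fin 3 := ![0, 2, 1]

/-- Flip the first nonzero entry. -/
def fl3 (g : Fin n → Fin 3) : Fin n → Fin 3 := fun x =>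
  if ∀ y, y < x → g y = 0 then fl (g x) else g x

lemma fl3_pos {g : Fin n → Fin 3} {x : Fin n} (h : ∀ y, y < x → g y = 0) :
    fl3 g x = fl (g x) := by
  unfold fl3; rw [if_pos h]

lemma fl3_neg {g : Fin n → Fin 3} {x : Fin n} (h : ¬ ∀ y, y < x → g y = 0) :
    fl3 g x = g x := by
  unfold fl3; rw [if_neg h]

lemma fl_zero_iff : ∀ v : Fin 3, fl v = 0 ↔ v = 0 := by decide

lemma fl3_zero_iff (g : Fin n → Fin 3) (x : Fin n) : fl3 g x = 0 ↔ g x = 0 := by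
  unfold fl3
  split
  · exact fl_zero_iff (g x)
  · rfl

lemma fl3_invol (g : Fin n → Fin 3) : fl3 (fl3 g) = g := by
  funext x
  have hc : (∀ y, y < x → fl3 g y = 0) ↔ (∀ y, y < x → g y = 0) := by
    constructor <;> intro h y hy
    · exact (fl3_zero_iff g y).mp (h y hy)
    · exact (fl3_zero_iff g y).mpr (h y hy)
  by_cases h : ∀ y, y < x → g y = 0
  · rw [fl3_pos (hc.mpr h), fl3_pos h]
    have : ∀ v : Fin 3, fl (fl v) = v := by decide
    exact this (g x)
  · rw [fl3_neg (fun hh => h (hc.mp hh)), fl3_neg h]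

/-- facts about the minimal nonzero index -/
lemma min_nonzero (g : Fin n → Fin 3) (hx : ∃ x, g x ≠ 0) :
    ∃ m, g m ≠ 0 ∧ ∀ y, y < m → g y = 0 := by
  classical
  obtain ⟨x, hx⟩ := hx
  have hne : (Finset.univ.filter (fun y => g y ≠ 0)).Nonempty := ⟨x, by simp [hx]⟩
  refine ⟨(Finset.univ.filter (fun y => g y ≠ 0)).min' hne, ?_, ?_⟩
  · have := Finset.min'_mem _ hne
    simp at this; exact this
  · intro y hy
    by_contra hne0
    have := Finset.min'_le (Finset.univ.filter (fun y => g y ≠ 0)) y (by simp [hne0])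
    exact absurd (lt_of_lt_of_le hy this) (lt_irrefl y)

lemma card_P3 : (Finset.univ.filter (fun g : Fin n → Fin 3 => P3 g)).card = (3 ^ n + 1) / 2 := by
  classical
  set A := Finset.univ.filter (fun g : Fin n → Fin 3 => P3 g) with hA
  set B := Finset.univ.filter (fun g : Fin n → Fin 3 => ¬ P3 g) with hB
  set A' := Finset.univ.filter (fun g : Fin n → Fin 3 => P3 g ∧ ∃ x, g x ≠ 0) with hA'
  -- A' and B are in bijection via fl3
  have hAB : A'.card = B.card := by
    apply Finset.card_bij' (fun g _ => fl3 g) (fun g _ => fl3 g)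
    · -- maps A' to B
      intro g hg
      rw [hA', Finset.mem_filter] at hg
      obtain ⟨-, hP, hx⟩ := hg
      obtain ⟨m, hm0, hmin⟩ := min_nonzero g hx
      have hm2 : g m = 2 := by
        rcases fin3 (g m) with h | h | h
        · exact absurd h hm0
        · obtain ⟨y, hy, hy2⟩ := hP m h
          rw [hmin y hy] at hy2
          exact absurd hy2 (by decide)
        · exact h
      rw [hB, Finset.mem_filter]
      refine ⟨Finset.mem_univ _, fun hP' => ?_⟩
      have hflm : fl3 g m = 1 := by
        rw [fl3_pos hmin, hm2]; rfl
      obtain ⟨y, hy, hy2⟩ := hP' m hflm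
      have : fl3 g y = 0 := by
        rw [fl3_pos (fun z hz => hmin z (lt_trans hz hy)), hmin y hy]
        rfl
      rw [this] at hy2
      exact absurd hy2 (by decide)
    · -- maps B to A'
      intro g hg
      rw [hB, Finset.mem_filter] at hg
      obtain ⟨-, hP⟩ := hg
      rw [P3] at hP
      push_neg at hP
      obtain ⟨x, hx1, hxw⟩ := hP
      obtain ⟨m, hm0, hmin⟩ := min_nonzero g ⟨x, by rw [hx1]; decide⟩
      have hm1 : g m = 1 := by
        rcases fin3 (g m) with h | h | h
        · exact absurd h hm0
        · exact h
        · -- g m = 2 : contradiction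
          exfalso
          have hmx : m ≤ x := by
            by_contra hmx
            push_neg at hmx
            rw [hmin x hmx] at hx1
            exact absurd hx1 (by decide)
          rcases lt_or_eq_of_le hmx with hlt | heq
          · exact (hxw m hlt) h
          · rw [heq, hx1] at h; exact absurd h (by decide)
      have hflm : fl3 g m = 2 := by
        rw [fl3_pos hmin, hm1]; rfl
      rw [hA', Finset.mem_filter]
      refine ⟨Finset.mem_univ _, ?_, ⟨m, by rw [hflm]; decide⟩⟩
      intro z hz1
      rcases lt_trichotomy z m with h | h | h
      · exfalso
        have : fl3 g z = 0 := by
          rw [fl3_pos (fun w hw => hmin w (lt_trans hw h)), hmin z h]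
          rfl
        rw [this] at hz1
        exact absurd hz1 (by decide)
      · rw [h, hflm] at hz1; exact absurd hz1 (by decide)
      · exact ⟨m, h, hflm⟩
    · intro g _; exact fl3_invol g
    · intro g _; exact fl3_invol g
  -- A = A' plus the zero string
  have hAA' : A.card = A'.card + 1 := by
    have hsplit := Finset.card_filter_add_card_filter_not
      (s := A) (p := fun g => ∃ x, g x ≠ 0)
    have h1 : A.filter (fun g => ∃ x, g x ≠ 0) = A' := by
      rw [hA, hA', Finset.filter_filter]
    have h2 : A.filter (fun g => ¬ ∃ x, g x ≠ 0) = {fun _ => (0 : Fin 3)} := by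
      ext g
      rw [hA, Finset.filter_filter, Finset.mem_filter, Finset.mem_singleton]
      constructor
      · rintro ⟨-, -, h⟩
        push_neg at h
        funext x; exact h x
      · rintro rfl
        refine ⟨Finset.mem_univ _, fun x hx => ?_, ?_⟩
        · simp at hx
        · push_neg
          intro x; rfl
    rw [h1, h2] at hsplit
    simp at hsplit
    omega
  -- A.card + B.card = 3 ^ n
  have hABtot : A.card + B.card = 3 ^ n := by
    rw [hA, hB]
    rw [Finset.card_filter_add_card_filter_not]
    simp [Fintype.card_fun]
  omega

end Aux

/-- The number of idempotents in `DORPₙ` equals `(3ⁿ + 1)/2`. -/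
theorem stmt15 (n : ℕ) :
    Set.ncard {ρ : PT n | IsDORP ρ ∧ comp ρ ρ = ρ} = (3 ^ n + 1) / 2 := by
  classical
  have hset : {ρ : PT n | IsDORP ρ ∧ comp ρ ρ = ρ}
      = {ρ : PT n | IsDecreasing ρ ∧ IsIsotone ρ ∧ comp ρ ρ = ρ} := by
    ext ρ
    constructor
    · rintro ⟨⟨hdec, hmono⟩, hidem⟩
      rcases hmono with hiso | hanti
      · exact ⟨hdec, hiso, hidem⟩
      · exact ⟨hdec, anti_to_iso hanti hidem, hidem⟩
    · rintro ⟨hdec, hiso, hidem⟩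
      exact ⟨⟨hdec, Or.inl hiso⟩, hidem⟩
  rw [hset]
  have hbij := enc_bijOn (n := n)
  have himg : enc '' {ρ : PT n | IsDecreasing ρ ∧ IsIsotone ρ ∧ comp ρ ρ = ρ}
      = {g : Fin n → Fin 3 | P3 g} := hbij.image_eq
  have hinj := hbij.injOn
  have h1 : ({g : Fin n → Fin 3 | P3 g} : Set _).ncard
      = Set.ncard {ρ : PT n | IsDecreasing ρ ∧ IsIsotone ρ ∧ comp ρ ρ = ρ} := by
    rw [← himg]
    exact Set.ncard_image_of_injOn hinj
  rw [← h1]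
  have h2 : ({g : Fin n → Fin 3 | P3 g} : Set _)
      = ↑(Finset.univ.filter (fun g : Fin n → Fin 3 => P3 g)) := by
    ext g; simp
  rw [h2, Set.ncard_coe_finset, card_P3]
end

section
/- For 2 ≤ p ≤ ⌈n/2⌉−1 and p+1 ≤ i ≤ n−p, the convex vital element δ_{p,i} (the map i+j ↦ i−j on {i,…,i+p−1}) equals δ_{p+1,i}·ε, the product of the convex vital element of height p+1 at i with the idempotent ε that is the identity on {i−p+1, …, i+1}. -/
theorem PT.ext_of_eq_some {n : ℕ} {ρ σ : PT n}
    (h : ∀ x y, ρ x = some y ↔ σ x = some y) : ρ = σ :=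
  funext fun x => Option.ext (h x)

theorem comp_eq_some_iff {n : ℕ} {ρ σ : PT n} {x z : Fin n} :
    comp ρ σ x = some z ↔ ∃ y, ρ x = some y ∧ σ y = some z :=
  Option.bind_eq_some_iff

theorem comp_eq_some_iff_of_partialId {n : ℕ} {ρ σ : PT n} {D : Fin n → Prop}
    (hσ : ∀ x y, σ x = some y ↔ D x ∧ y = x) (x y : Fin n) :
    comp ρ σ x = some y ↔ ρ x = some y ∧ D y := by
  simp only [comp_eq_some_iff, hσ]
  exact ⟨fun ⟨_, hz, hDz, hyz⟩ => hyz ▸ ⟨hz, hDz⟩, fun ⟨hy, hDy⟩ => ⟨y, hy, hDy, rfl⟩⟩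

/-- The 1-indexed point `k ∈ [n]` is `x : Fin n` with `x.val + 1 = k`. -/
theorem stmt18_general (n p i : ℕ) (ρ ρ' ε : PT n)
    (hρ : ∀ x y : Fin n, ρ x = some y ↔
      (i ≤ x.val + 1 ∧ x.val + 1 ≤ i + p - 1 ∧ (y.val + 1) + (x.val + 1) = 2 * i))
    (hρ' : ∀ x y : Fin n, ρ' x = some y ↔
      (i ≤ x.val + 1 ∧ x.val + 1 ≤ i + p ∧ (y.val + 1) + (x.val + 1) = 2 * i))
    (hε : ∀ x y : Fin n, ε x = some y ↔
      (i - p + 1 ≤ x.val + 1 ∧ x.val + 1 ≤ i + 1 ∧ y = x)) :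
    comp ρ' ε = ρ := by
  refine PT.ext_of_eq_some fun x y => ?_
  rw [comp_eq_some_iff_of_partialId (fun x y => (hε x y).trans and_assoc.symm), hρ', hρ]
  -- `ε` keeps exactly the images of `i, …, i+p-1` and kills the image `i-p` of `i+p`.
  omega

/-- For `2 ≤ p ≤ ⌈n/2⌉ − 1` and `p+1 ≤ i ≤ n−p` (1-indexed), the convex vital element
`δ_{p,i}` equals `δ_{p+1,i}·ε`, where `ε` is the identity on `{i−p+1, …, i+1}`.
Here 1-indexed points `k ∈ [n]` correspond to `x : Fin n` with `x.val + 1 = k`. -/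
theorem stmt18 (n p i : ℕ) (h2 : 2 ≤ p) (hpn : p + 1 ≤ (n + 1) / 2)
    (hi1 : p + 1 ≤ i) (hi2 : i ≤ n - p) (ρ ρ' ε : PT n)
    (hρ : ∀ x y : Fin n, ρ x = some y ↔
      (i ≤ x.val + 1 ∧ x.val + 1 ≤ i + p - 1 ∧ (y.val + 1) + (x.val + 1) = 2 * i))
    (hρ' : ∀ x y : Fin n, ρ' x = some y ↔
      (i ≤ x.val + 1 ∧ x.val + 1 ≤ i + p ∧ (y.val + 1) + (x.val + 1) = 2 * i))
    (hε : ∀ x y : Fin n, ε x = some y ↔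
      (i - p + 1 ≤ x.val + 1 ∧ x.val + 1 ≤ i + 1 ∧ y = x)) :
    comp ρ' ε = ρ :=
  stmt18_general n p i ρ ρ' ε hρ hρ' hε
end
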